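/- arXiv:2203.03687 — 5 statements merged into one kernel-verified Lean document; each statement's English description precedes it below -/
import Mathlib

section
/- Let 𝔖 be a set association scheme on a finite set Ω and let G be a subgroup of Sym(k), k ≥ 1. Then the wreath product 𝔖 ≀ G is schurian if and only if 𝔖 is schurian. -/
namespace Paper


def IsTriangle {Ω : Type*} (a b c : Set Ω) : Prop :=
  a ⊆ b ∪ c ∧ b ⊆ a ∪ c ∧ c ⊆ a ∪ b

noncomputable def tripleType {Ω : Type*} (a b c : Set Ω) : ℕ × ℕ × ℕ × ℕ × ℕ × ℕ × ℕ :=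
  (a.ncard, b.ncard, c.ncard, (a ∩ b).ncard, (a ∩ c).ncard, (b ∩ c).ncard, (a ∩ b ∩ c).ncard)

noncomputable def typeCount {Ω : Type*} (β γ : Set (Set Ω)) (a : Set Ω) (τ : ℕ × ℕ × ℕ × ℕ × ℕ × ℕ × ℕ) : ℕ :=
  {p : Set Ω × Set Ω | p.1 ∈ β ∧ p.2 ∈ γ ∧ tripleType a p.1 p.2 = τ}.ncard

def IsSAS {Ω : Type*} (S : Set (Set (Set Ω))) : Prop :=
  Setoid.IsPartition S ∧
  (∀ α ∈ S, ∀ a ∈ α, ∀ a' ∈ α, Set.ncard a = Set.ncard a') ∧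
  (∀ α ∈ S, ∀ β ∈ S, ∀ γ ∈ S, ∀ a ∈ α, ∀ a' ∈ α,
    ∀ t₁ t₂ t₃ : Set Ω, IsTriangle t₁ t₂ t₃ →
      typeCount β γ a (tripleType t₁ t₂ t₃) = typeCount β γ a' (tripleType t₁ t₂ t₃))

def SetHomog {Ω : Type*} (S : Set (Set (Set Ω))) : Prop :=
  {a : Set Ω | ∃ v : Ω, a = {v}} ∈ S

def setAutGroup {Ω : Type*} (S : Set (Set (Set Ω))) : Subgroup (Equiv.Perm Ω) where
  carrier := {π | ∀ α ∈ S, ∀ a : Set Ω, a ∈ α ↔ ⇑π '' a ∈ α}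
  one_mem' := by intro α hα a; simp
  mul_mem' := by
    intro g h hg hh α hα a
    have h1 : ⇑(g * h) '' a = ⇑g '' (⇑h '' a) := by
      rw [Equiv.Perm.coe_mul, Set.image_comp]
    rw [h1]
    exact (hh α hα a).trans (hg α hα (⇑h '' a))
  inv_mem' := by
    intro g hg α hα a
    have h0 := hg α hα (⇑g⁻¹ '' a)
    have h2 : ⇑g '' (⇑g⁻¹ '' a) = a := by
      simp [← Set.image_comp]
    rw [h2] at h0
    exact h0.symm

def SetSchurian {Ω : Type*} (S : Set (Set (Set Ω))) : Prop :=
  S = Set.range (fun a : Set Ω => {b : Set Ω | ∃ π ∈ setAutGroup S, b = ⇑π '' a})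

def fiber {Ω : Type*} {k : ℕ} (s : Set (Ω × Fin k)) (j : Fin k) : Set Ω := {ω | (ω, j) ∈ s}

def wreath {Ω : Type*} (S : Set (Set (Set Ω))) {k : ℕ} (G : Subgroup (Equiv.Perm (Fin k))) :
    Set (Set (Set (Ω × Fin k))) :=
  {c | ∃ α : Fin k → Set (Set Ω), (∀ j, α j ∈ S) ∧
      c = {s : Set (Ω × Fin k) | ∃ π ∈ G, ∀ j, fiber s j ∈ α (π⁻¹ j)}}

/-!
If `𝔖` is schurian, each cell of `𝔖 ≀ G` is a single orbit of `Aut(𝔖) ≀ G ≤ Aut(𝔖 ≀ G)`: two of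
its members differ by a permutation in `G` of the blocks `Ω × {j}` followed by automorphisms of
`𝔖` on the fibers.

Conversely, all members of a cell have the same size, so `{∅}` is a cell of `𝔖`, and for `a` in a
cell `β` the set `a × {j}` lies in a cell of `𝔖 ≀ G` whose fibers off `j` are `∅`. Hence
automorphisms of `𝔖 ≀ G` map blocks into blocks, and one carrying `a × {j}` to `b × {j}` (with
`b ≠ ∅`) preserves `Ω × {j}` and restricts to an automorphism of `𝔖` carrying `a` to `b`.
-/

section Automorphisms

variable {Ω : Type*} {S : Set (Set (Set Ω))}

def setOrbit (H : Subgroup (Equiv.Perm Ω)) (a : Set Ω) : Set (Set Ω) :=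
  {b | ∃ π ∈ H, b = ⇑π '' a}

theorem image_mem_of_mem_setAutGroup {π : Equiv.Perm Ω} (hπ : π ∈ setAutGroup S)
    {α : Set (Set Ω)} (hα : α ∈ S) {a : Set Ω} (ha : a ∈ α) : ⇑π '' a ∈ α :=
  (hπ α hα a).mp ha

theorem mem_setAutGroup_of_image_mem (hP : Setoid.IsPartition S) {π : Equiv.Perm Ω}
    (h : ∀ α ∈ S, ∀ a ∈ α, ⇑π '' a ∈ α) : π ∈ setAutGroup S := by
  refine fun α hα a => ⟨h α hα a, fun hπa => ?_⟩
  obtain ⟨β, hβ, haβ⟩ := (hP.2 a).exists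
  rwa [Setoid.eq_of_mem_eqv_class hP.2 hα hπa hβ (h β hβ a haβ)]

theorem SetSchurian.exists_perm (hS : SetSchurian S) {α : Set (Set Ω)} (hα : α ∈ S)
    {a b : Set Ω} (ha : a ∈ α) (hb : b ∈ α) : ∃ π ∈ setAutGroup S, b = ⇑π '' a := by
  rw [hS] at hα
  obtain ⟨c, rfl⟩ := hα
  obtain ⟨π₁, hπ₁, rfl⟩ := ha
  obtain ⟨π₂, hπ₂, rfl⟩ := hb
  refine ⟨π₂ * π₁⁻¹, mul_mem hπ₂ (inv_mem hπ₁), ?_⟩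
  simp [Set.image_image]

theorem setSchurian_of_forall_exists
    (hcell : ∀ α ∈ S, ∃ a, setOrbit (setAutGroup S) a = α)
    (hset : ∀ a, ∃ α ∈ S, setOrbit (setAutGroup S) a = α) : SetSchurian S := by
  refine Set.Subset.antisymm (fun α hα => hcell α hα) ?_
  rintro _ ⟨a, rfl⟩
  obtain ⟨α, hα, h⟩ := hset a
  change setOrbit (setAutGroup S) a ∈ S
  exact h ▸ hα

theorem setSchurian_of_exists_perm (hP : Setoid.IsPartition S)
    (htrans : ∀ α ∈ S, ∀ a ∈ α, ∀ b ∈ α, ∃ π ∈ setAutGroup S, b = ⇑π '' a) :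
    SetSchurian S := by
  have horbit : ∀ α ∈ S, ∀ a ∈ α, setOrbit (setAutGroup S) a = α := by
    refine fun α hα a ha => Set.Subset.antisymm ?_ (fun b hb => htrans α hα a ha b hb)
    rintro _ ⟨π, hπ, rfl⟩
    exact image_mem_of_mem_setAutGroup hπ hα ha
  refine setSchurian_of_forall_exists (fun α hα => ?_) (fun a => ?_)
  · obtain ⟨a, ha⟩ := Setoid.nonempty_of_mem_partition hP hα
    exact ⟨a, horbit α hα a ha⟩
  · obtain ⟨α, hα, ha⟩ := (hP.2 a).exists
    exact ⟨α, hα, horbit α hα a ha⟩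

theorem singleton_empty_mem [Finite Ω] (hP : Setoid.IsPartition S)
    (hcard : ∀ α ∈ S, ∀ a ∈ α, ∀ a' ∈ α, a.ncard = a'.ncard) : ({∅} : Set (Set Ω)) ∈ S := by
  obtain ⟨α, hα, hemp⟩ := (hP.2 ∅).exists
  convert hα
  refine Set.Subset.antisymm (by simpa using hemp) fun b hb => ?_
  have hb0 : b.ncard = 0 := by simpa using hcard α hα b hb ∅ hemp
  exact (Set.ncard_eq_zero b.toFinite).mp hb0

end Automorphisms

section Wreath

variable {Ω : Type*} {S : Set (Set (Set Ω))} {k : ℕ} {G : Subgroup (Equiv.Perm (Fin k))}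

def wreathCell (G : Subgroup (Equiv.Perm (Fin k))) (α : Fin k → Set (Set Ω)) :
    Set (Set (Ω × Fin k)) :=
  {s | ∃ π ∈ G, ∀ j, fiber s j ∈ α (π⁻¹ j)}

theorem wreathCell_mem_wreath {α : Fin k → Set (Set Ω)} (hα : ∀ j, α j ∈ S) :
    wreathCell G α ∈ wreath S G :=
  ⟨α, hα, rfl⟩

theorem mem_wreathCell_of_fiber_mem {α : Fin k → Set (Set Ω)} {s : Set (Ω × Fin k)}
    (hs : ∀ j, fiber s j ∈ α j) : s ∈ wreathCell G α :=
  ⟨1, one_mem G, fun j => by simpa using hs j⟩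

theorem eq_of_fiber_eq {s t : Set (Ω × Fin k)} (h : ∀ j, fiber s j = fiber t j) : s = t := by
  ext ⟨ω, j⟩
  exact Set.ext_iff.mp (h j) ω

def wreathPerm (g : Fin k → Equiv.Perm Ω) (σ : Equiv.Perm (Fin k)) :
    Equiv.Perm (Ω × Fin k) where
  toFun p := (g (σ p.2) p.1, σ p.2)
  invFun p := ((g p.2)⁻¹ p.1, σ⁻¹ p.2)
  left_inv := by rintro ⟨ω, j⟩; simp
  right_inv := by rintro ⟨ω, j⟩; simp

theorem wreathPerm_inv (g : Fin k → Equiv.Perm Ω) (σ : Equiv.Perm (Fin k)) :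
    (wreathPerm g σ)⁻¹ = wreathPerm (fun j => (g (σ j))⁻¹) σ⁻¹ := by
  ext ⟨ω, j⟩ <;> simp [wreathPerm, Equiv.Perm.inv_def]

theorem fiber_image_wreathPerm (g : Fin k → Equiv.Perm Ω) (σ : Equiv.Perm (Fin k))
    (s : Set (Ω × Fin k)) (j : Fin k) :
    fiber (⇑(wreathPerm g σ) '' s) j = ⇑(g j) '' fiber s (σ⁻¹ j) := by
  ext ω
  constructor
  · rintro ⟨⟨ω', j'⟩, hmem, heq⟩
    simp only [wreathPerm, Equiv.coe_fn_mk, Prod.mk.injEq] at heq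
    obtain ⟨rfl, rfl⟩ := heq
    exact ⟨ω', by simpa [fiber] using hmem, rfl⟩
  · rintro ⟨ω', hω', rfl⟩
    exact ⟨(ω', σ⁻¹ j), hω', by simp [wreathPerm]⟩

theorem wreathPerm_image_mem_wreathCell {g : Fin k → Equiv.Perm Ω}
    (hg : ∀ j, g j ∈ setAutGroup S) {σ : Equiv.Perm (Fin k)} (hσ : σ ∈ G)
    {α : Fin k → Set (Set Ω)} (hα : ∀ j, α j ∈ S) {s : Set (Ω × Fin k)}
    (hs : s ∈ wreathCell G α) : ⇑(wreathPerm g σ) '' s ∈ wreathCell G α := by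
  obtain ⟨π, hπ, hfib⟩ := hs
  refine ⟨σ * π, mul_mem hσ hπ, fun j => ?_⟩
  rw [fiber_image_wreathPerm, mul_inv_rev, Equiv.Perm.mul_apply]
  exact image_mem_of_mem_setAutGroup (hg j) (hα _) (hfib (σ⁻¹ j))

theorem wreathPerm_mem_setAutGroup {g : Fin k → Equiv.Perm Ω}
    (hg : ∀ j, g j ∈ setAutGroup S) {σ : Equiv.Perm (Fin k)} (hσ : σ ∈ G) :
    wreathPerm g σ ∈ setAutGroup (wreath S G) := by
  rintro _ ⟨α, hα, rfl⟩ s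
  refine ⟨wreathPerm_image_mem_wreathCell hg hσ hα, fun hs => ?_⟩
  have hinv := wreathPerm_image_mem_wreathCell (fun j => inv_mem (hg (σ j))) (inv_mem hσ) hα hs
  rw [← wreathPerm_inv] at hinv
  simp only [Set.image_image, Equiv.Perm.inv_def, Equiv.symm_apply_apply, Set.image_id'] at hinv
  exact hinv

theorem wreathCell_eq_setOrbit (hS : SetSchurian S) {α : Fin k → Set (Set Ω)}
    (hα : ∀ j, α j ∈ S) {s : Set (Ω × Fin k)} (hs : ∀ j, fiber s j ∈ α j) :
    wreathCell G α = setOrbit (setAutGroup (wreath S G)) s := by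
  refine Set.Subset.antisymm ?_ ?_
  · rintro t ⟨π, hπ, hft⟩
    choose g hg hfib using fun j => hS.exists_perm (hα _) (hs (π⁻¹ j)) (hft j)
    refine ⟨wreathPerm g π, wreathPerm_mem_setAutGroup hg hπ, eq_of_fiber_eq fun j => ?_⟩
    rw [fiber_image_wreathPerm, hfib]
  · rintro _ ⟨P, hP, rfl⟩
    exact image_mem_of_mem_setAutGroup hP (wreathCell_mem_wreath hα)
      (mem_wreathCell_of_fiber_mem hs)

theorem setSchurian_wreath (hP : Setoid.IsPartition S) (hS : SetSchurian S) :
    SetSchurian (wreath S G) := by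
  refine setSchurian_of_forall_exists ?_ fun s => ?_
  · rintro _ ⟨α, hα, rfl⟩
    choose a ha using fun j => Setoid.nonempty_of_mem_partition hP (hα j)
    exact ⟨{p | p.1 ∈ a p.2}, (wreathCell_eq_setOrbit (s := {p | p.1 ∈ a p.2}) hS hα ha).symm⟩
  · choose α hα hs using fun j => (hP.2 (fiber s j)).exists
    exact ⟨_, wreathCell_mem_wreath hα, (wreathCell_eq_setOrbit hS hα hs).symm⟩

end Wreath

section Blocks

variable {Ω : Type*} {S : Set (Set (Set Ω))} {k : ℕ} {G : Subgroup (Equiv.Perm (Fin k))}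

theorem fiber_prod_singleton (x : Set Ω) (j m : Fin k) :
    fiber (x ×ˢ {j}) m = if m = j then x else ∅ := by
  ext ω
  by_cases h : m = j <;> simp [fiber, h]

def blockCell (β : Set (Set Ω)) (j : Fin k) : Fin k → Set (Set Ω) :=
  fun m => if m = j then β else {∅}

theorem blockCell_mem_wreath (hε : ({∅} : Set (Set Ω)) ∈ S) {β : Set (Set Ω)} (hβ : β ∈ S)
    (j : Fin k) : wreathCell G (blockCell β j) ∈ wreath S G :=
  wreathCell_mem_wreath fun m => by by_cases h : m = j <;> simp [blockCell, h, hβ, hε]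

theorem prod_singleton_mem_wreathCell_blockCell {β : Set (Set Ω)} {x : Set Ω} (hx : x ∈ β)
    (j : Fin k) : x ×ˢ {j} ∈ wreathCell G (blockCell β j) :=
  mem_wreathCell_of_fiber_mem fun m => by
    by_cases h : m = j <;> simp [blockCell, fiber_prod_singleton, h, hx]

-- `univ ×ˢ {j}` lies in a cell of `𝔖 ≀ G` all of whose fibers off `j` are `∅`.
theorem exists_block_image (hP : Setoid.IsPartition S) (hε : ({∅} : Set (Set Ω)) ∈ S)
    {P : Equiv.Perm (Ω × Fin k)} (hPaut : P ∈ setAutGroup (wreath S G)) (j : Fin k) :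
    ∃ i, ∀ ω, (P (ω, j)).2 = i := by
  obtain ⟨β, hβ, huniv⟩ := (hP.2 Set.univ).exists
  obtain ⟨π, -, hfib⟩ := image_mem_of_mem_setAutGroup hPaut (blockCell_mem_wreath hε hβ j)
    (prod_singleton_mem_wreathCell_blockCell (G := G) huniv j)
  refine ⟨π j, fun ω => by_contra fun hne => ?_⟩
  have hne' : π⁻¹ (P (ω, j)).2 ≠ j := fun h => hne (Equiv.Perm.inv_eq_iff_eq.mp h)
  have hmem : (P (ω, j)).1 ∈ fiber (⇑P '' Set.univ ×ˢ {j}) (P (ω, j)).2 :=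
    ⟨(ω, j), by simp, rfl⟩
  have hempty := hfib (P (ω, j)).2
  simp only [blockCell, hne', if_false, Set.mem_singleton_iff] at hempty
  rw [hempty] at hmem
  exact hmem

theorem exists_perm_of_block_invariant [Finite Ω] {P : Equiv.Perm (Ω × Fin k)} {j : Fin k}
    (h : ∀ ω, (P (ω, j)).2 = j) : ∃ g : Equiv.Perm Ω, ∀ ω, P (ω, j) = (g ω, j) := by
  have hinj : Function.Injective fun ω => (P (ω, j)).1 := fun ω ω' hω => by
    simpa using P.injective (Prod.ext hω ((h ω).trans (h ω').symm))
  exact ⟨Equiv.ofBijective _ (Finite.injective_iff_bijective.mp hinj),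
    fun ω => Prod.ext rfl (h ω)⟩

theorem image_prod_singleton_of_block_invariant {P : Equiv.Perm (Ω × Fin k)} {g : Ω → Ω}
    {j : Fin k} (hg : ∀ ω, P (ω, j) = (g ω, j)) (x : Set Ω) :
    ⇑P '' x ×ˢ {j} = (g '' x) ×ˢ {j} := by
  simp only [Set.prod_singleton, Set.image_image, hg]

theorem image_mem_of_block_invariant (hε : ({∅} : Set (Set Ω)) ∈ S)
    {P : Equiv.Perm (Ω × Fin k)} (hPaut : P ∈ setAutGroup (wreath S G)) {g : Ω → Ω} {j : Fin k}
    (hg : ∀ ω, P (ω, j) = (g ω, j)) {β : Set (Set Ω)} (hβ : β ∈ S) {x : Set Ω} (hx : x ∈ β) :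
    g '' x ∈ β := by
  rcases x.eq_empty_or_nonempty with rfl | hne
  · simpa using hx
  obtain ⟨π, -, hfib⟩ := image_mem_of_mem_setAutGroup hPaut (blockCell_mem_wreath hε hβ j)
    (prod_singleton_mem_wreathCell_blockCell (G := G) hx j)
  have hgx := hfib j
  rw [image_prod_singleton_of_block_invariant hg, fiber_prod_singleton, if_pos rfl] at hgx
  by_cases hπ : π⁻¹ j = j
  · simpa [blockCell, hπ] using hgx
  · simp only [blockCell, hπ, if_false, Set.mem_singleton_iff, Set.image_eq_empty] at hgx
    exact absurd hgx hne.ne_empty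

theorem setSchurian_of_setSchurian_wreath [Finite Ω] (hP : Setoid.IsPartition S)
    (hε : ({∅} : Set (Set Ω)) ∈ S) (hk : 0 < k) (hW : SetSchurian (wreath S G)) :
    SetSchurian S := by
  refine setSchurian_of_exists_perm hP fun β hβ a ha b hb => ?_
  rcases b.eq_empty_or_nonempty with rfl | ⟨ωb, hωb⟩
  · obtain rfl : β = {∅} := Setoid.eq_of_mem_eqv_class hP.2 hβ hb hε rfl
    exact ⟨1, one_mem _, by simp_all⟩
  set j : Fin k := ⟨0, hk⟩
  obtain ⟨P, hPaut, hPab⟩ := hW.exists_perm (blockCell_mem_wreath hε hβ j)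
    (prod_singleton_mem_wreathCell_blockCell ha j) (prod_singleton_mem_wreathCell_blockCell hb j)
  obtain ⟨i, hi⟩ := exists_block_image hP hε hPaut j
  obtain rfl : i = j := by
    have hωbj : (ωb, j) ∈ ⇑P '' a ×ˢ {j} := hPab ▸ ⟨hωb, rfl⟩
    obtain ⟨⟨ω, _⟩, ⟨-, rfl⟩, hω⟩ := hωbj
    simpa [hω] using (hi ω).symm
  obtain ⟨g, hg⟩ := exists_perm_of_block_invariant hi
  refine ⟨g, mem_setAutGroup_of_image_mem hP fun γ hγ x hx =>
    image_mem_of_block_invariant hε hPaut hg hγ hx, ?_⟩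
  rw [image_prod_singleton_of_block_invariant hg] at hPab
  simpa [fiber_prod_singleton] using congrArg (fiber · j) hPab

end Blocks

theorem stmt12 {Ω : Type*} [Finite Ω] (S : Set (Set (Set Ω))) (hS : IsSAS S)
    (k : ℕ) (hk : 1 ≤ k) (G : Subgroup (Equiv.Perm (Fin k))) :
    SetSchurian (wreath S G) ↔ SetSchurian S :=
  ⟨setSchurian_of_setSchurian_wreath hS.1 (singleton_empty_mem hS.1 hS.2.1) hk,
    setSchurian_wreath hS.1⟩

end Paper
end

section
/- Let m ≥ 2k > 0 and let a, b, c ∈ {0, 1, …, k}. Let u, v be k-element subsets of [m] with |u \ v| = a. Then there exists a k-element subset w of [m] with |u \ w| = b and |w \ v| = c if and only if a ≤ b + c, b ≤ a + c, c ≤ a + b, and a + b + c ≤ m. -/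
/-!
The sizes `|u \ w|` behave like distances (Johnson distance), so the three triangle inequalities are
necessary, and `a + b + c ≤ m` holds because `v \ u`, `u \ w`, `w \ v` are pairwise disjoint.
Conversely, `w` is assembled region by region from the Venn diagram of `u` and `v`: it takes `i`
points of `u ∩ v`, `k - b - i` of `u \ v`, `k - c - i` of `v \ u` and `i + b + c - k` outside
`u ∪ v`, where `i` is the largest of `k - a - b`, `k - a - c`, `k - b - c`.
-/

namespace Paper

open Finset

section

variable {α : Type*} [DecidableEq α]

lemma card_sdiff_le_card_sdiff_add_card_sdiff (s t u : Finset α) :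
    #(s \ u) ≤ #(s \ t) + #(t \ u) :=
  (card_le_card (sdiff_triangle s t u)).trans (card_union_le _ _)

lemma card_sdiff_add_card_sdiff_add_card_sdiff_le [Fintype α] (u v w : Finset α) :
    #(v \ u) + #(u \ w) + #(w \ v) ≤ Fintype.card α := by
  have hvu_uw : Disjoint (v \ u) (u \ w) := disjoint_left.2 fun x hx hx' => by grind
  have hvu_wv : Disjoint (v \ u) (w \ v) := disjoint_left.2 fun x hx hx' => by grind
  have huw_wv : Disjoint (u \ w) (w \ v) := disjoint_left.2 fun x hx hx' => by grind
  rw [← card_union_of_disjoint hvu_uw,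
    ← card_union_of_disjoint (disjoint_union_left.2 ⟨hvu_wv, huw_wv⟩)]
  exact card_le_univ _

lemma exists_subset_card_inter_card_sdiff_eq {s t : Finset α} {p q : ℕ}
    (hp : p ≤ #(s ∩ t)) (hq : q ≤ #(s \ t)) :
    ∃ r ⊆ s, #(r ∩ t) = p ∧ #(r \ t) = q := by
  obtain ⟨r₁, hr₁, rfl⟩ := exists_subset_card_eq hp
  obtain ⟨r₂, hr₂, rfl⟩ := exists_subset_card_eq hq
  have h₁ : ∀ x ∈ r₁, x ∈ s ∧ x ∈ t := fun x hx => mem_inter.1 (hr₁ hx)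
  have h₂ : ∀ x ∈ r₂, x ∈ s ∧ x ∉ t := fun x hx => mem_sdiff.1 (hr₂ hx)
  refine ⟨r₁ ∪ r₂, union_subset (hr₁.trans inter_subset_left) (hr₂.trans sdiff_subset), ?_, ?_⟩
  · congr 1; ext x; grind
  · congr 1; ext x; grind

lemma exists_card_sdiff_eq_of_le [Fintype α] {u v : Finset α} {k a b c : ℕ}
    (hu : #u = k) (hv : #v = k) (huv : #(u \ v) = a) (hb : b ≤ k) (hc : c ≤ k)
    (hk : 2 * k ≤ Fintype.card α) (hab : a ≤ b + c) (hba : b ≤ a + c) (hca : c ≤ a + b)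
    (habc : a + b + c ≤ Fintype.card α) :
    ∃ w : Finset α, #w = k ∧ #(u \ w) = b ∧ #(w \ v) = c := by
  have hcompl : #(uᶜ ∩ v) = a := by
    rw [inter_comm, ← sdiff_eq_inter_compl, ← card_sdiff_comm (hu.trans hv.symm), huv]
  have hinter : #(u ∩ v) = k - a := by have := card_sdiff_add_card_inter u v; omega
  have houter : #(uᶜ \ v) = Fintype.card α - k - a := by
    have := card_sdiff_add_card_inter uᶜ v; rw [card_compl] at this; omega
  obtain ⟨i, hi⟩ : ∃ i, i = max (k - a - b) (max (k - a - c) (k - b - c)) := ⟨_, rfl⟩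
  obtain ⟨X, hXu, hXv, hXv'⟩ :=
    exists_subset_card_inter_card_sdiff_eq (s := u) (t := v) (p := i) (q := k - b - i)
      (by omega) (by omega)
  obtain ⟨Y, hYu, hYv, hYv'⟩ :=
    exists_subset_card_inter_card_sdiff_eq (s := uᶜ) (t := v) (p := k - c - i)
      (q := i + b + c - k) (by omega) (by omega)
  have huY : Disjoint u Y := disjoint_of_subset_right hYu disjoint_compl_right
  have hXY : Disjoint X Y := disjoint_of_subset_left hXu huY
  have hX : #X = k - b := by have := card_sdiff_add_card_inter X v; omega
  have hY : #Y = b := by have := card_sdiff_add_card_inter Y v; omega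
  refine ⟨X ∪ Y, ?_, ?_, ?_⟩
  · rw [card_union_of_disjoint hXY]; omega
  · rw [sdiff_union_distrib, huY.sdiff_eq_left, inter_eq_left.2 sdiff_subset,
      card_sdiff_of_subset hXu]
    omega
  · rw [union_sdiff_distrib, card_union_of_disjoint (hXY.mono sdiff_subset sdiff_subset)]
    omega

end

theorem stmt15_general (m k : ℕ) (hmk : 2 * k ≤ m)
    (a b c : ℕ) (hb : b ≤ k) (hc : c ≤ k)
    (u v : Finset (Fin m)) (hu : u.card = k) (hv : v.card = k)
    (huv : (u \ v).card = a) :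
    (∃ w : Finset (Fin m), w.card = k ∧ (u \ w).card = b ∧ (w \ v).card = c) ↔
    (a ≤ b + c ∧ b ≤ a + c ∧ c ≤ a + b ∧ a + b + c ≤ m) := by
  have hvu : #(v \ u) = a := card_sdiff_comm (hu.trans hv.symm) ▸ huv
  constructor
  · rintro ⟨w, hw, hub, hwc⟩
    have hwu : #(w \ u) = b := card_sdiff_comm (hw.trans hu.symm) ▸ hub
    refine ⟨?_, ?_, ?_, ?_⟩
    · simpa [huv, hub, hwc] using card_sdiff_le_card_sdiff_add_card_sdiff u w v
    · simpa [hwu, hwc, hvu, add_comm] using card_sdiff_le_card_sdiff_add_card_sdiff w v u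
    · simpa [hwc, hwu, huv, add_comm] using card_sdiff_le_card_sdiff_add_card_sdiff w u v
    · simpa [hvu, hub, hwc] using card_sdiff_add_card_sdiff_add_card_sdiff_le u v w
  · rintro ⟨hab, hba, hca, habc⟩
    exact exists_card_sdiff_eq_of_le hu hv huv hb hc (by simpa using hmk) hab hba hca
      (by simpa using habc)

theorem stmt15 (m k : ℕ) (hk : 0 < k) (hmk : 2 * k ≤ m)
    (a b c : ℕ) (ha : a ≤ k) (hb : b ≤ k) (hc : c ≤ k)
    (u v : Finset (Fin m)) (hu : u.card = k) (hv : v.card = k)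
    (huv : (u \ v).card = a) :
    (∃ w : Finset (Fin m), w.card = k ∧ (u \ w).card = b ∧ (w \ v).card = c) ↔
    (a ≤ b + c ∧ b ≤ a + c ∧ c ≤ a + b ∧ a + b + c ≤ m) :=
  stmt15_general m k hmk a b c hb hc u v hu hv huv

end Paper
end

section
/- Let 𝔖 be a vector association scheme on {0, …, k}^d. (1) If α is a cell of 𝔖, then α^c = {(k, …, k) − a : a ∈ α} is also a cell of 𝔖. (2) For all cells α, β of 𝔖, the domination graph {(a, b) ∈ α × β : a_i ≤ b_i for all i ∈ [d]} is biregular: the number of b ∈ β with a ≤ b (coordinatewise) is the same for every a ∈ α, and the number of a ∈ α with a ≤ b is the same for every b ∈ β. -/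
/-!
With `γ` the one-point cell `{(k, …, k)}`, the intersection number `Σ_{b ∈ β} p^a_{b,(k,…,k)}(m)`
counts the `w` disjoint from `v`, and equals `Σ_{b ∈ β} ∏ᵢ C(aᵢ, k - bᵢ) C(m - k - aᵢ, bᵢ)`.
For `m = 2k` the only surviving term is `b = (k, …, k) - a`, so whether `(k, …, k) - a` lies in `β`
depends only on the cell of `a`; this gives (1). For `m = 2k + r`, multiplying by factorials that
depend only on the orbits of `a` and of `β` turns the sum into
`Σ_{b ∈ β, b ≥ (k, …, k) - a} ∏ᵢ C(r, bᵢ + aᵢ - k)`, a polynomial in `r` that is constant on the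
cell of `a`. Its value at `r = -1` is `±#{b ∈ β | b ≥ (k, …, k) - a}`, with a sign that is constant
because coordinate sums are constant on orbits. Applying this to the cell `α^c` gives (2).
-/

namespace Paper


noncomputable def vasCount (k d m : ℕ) (β γ : Set (Fin d → Fin (k+1))) (u v : Fin d → Finset (Fin m)) : ℕ :=
  {w : Fin d → Finset (Fin m) | (∀ i, (w i).card = k) ∧
    (∃ b ∈ β, ∀ i, ((u i) \ (w i)).card = (b i : ℕ)) ∧
    (∃ c ∈ γ, ∀ i, ((w i) \ (v i)).card = (c i : ℕ))}.ncard

def IsVAS (k d : ℕ) (S : Set (Set (Fin d → Fin (k+1)))) : Prop :=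
  Setoid.IsPartition S ∧
  (∀ α ∈ S, ∀ a ∈ α, ∀ a' ∈ α, ∃ π : Equiv.Perm (Fin d), a' = a ∘ ⇑π) ∧
  (∀ α ∈ S, ∀ β ∈ S, ∀ γ ∈ S, ∀ a ∈ α, ∀ a' ∈ α, ∀ m : ℕ, 2 * k ≤ m →
    ∀ u v u' v' : Fin d → Finset (Fin m),
      (∀ i, (u i).card = k) → (∀ i, (v i).card = k) →
      (∀ i, ((u i) \ (v i)).card = (a i : ℕ)) →
      (∀ i, (u' i).card = k) → (∀ i, (v' i).card = k) →
      (∀ i, ((u' i) \ (v' i)).card = (a' i : ℕ)) →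
      vasCount k d m β γ u v = vasCount k d m β γ u' v')

def VASHomog (k d : ℕ) (S : Set (Set (Fin d → Fin (k+1)))) : Prop :=
  {a : Fin d → Fin (k+1) | ∃ i₀ : Fin d, (a i₀ : ℕ) = 1 ∧ ∀ i, i ≠ i₀ → (a i : ℕ) = 0} ∈ S

def coVec {k d : ℕ} (a : Fin d → Fin (k+1)) : Fin d → Fin (k+1) :=
  fun i => ⟨k - (a i : ℕ), Nat.lt_succ_of_le (Nat.sub_le _ _)⟩

open Finset Polynomial
open scoped Nat

noncomputable def binomPoly (n : ℕ) : ℚ[X] := C (n ! : ℚ)⁻¹ * descPochhammer ℚ n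

theorem eval_natCast_binomPoly (r n : ℕ) : (binomPoly n).eval (r : ℚ) = r.choose n := by
  rw [binomPoly, eval_mul, eval_C, descPochhammer_eval_eq_descFactorial,
    Nat.descFactorial_eq_factorial_mul_choose, Nat.cast_mul, inv_mul_cancel_left₀]
  exact_mod_cast n.factorial_ne_zero

theorem eval_neg_one_binomPoly (n : ℕ) : (binomPoly n).eval (-1) = (-1) ^ n := by
  have h := ascPochhammer_eval_neg_eq_descPochhammer ℚ (-1 : ℚ) n
  rw [neg_neg, ascPochhammer_eval_one] at h
  have hdesc : (descPochhammer ℚ n).eval (-1) = (-1) ^ n * n ! := by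
    rw [h, ← mul_assoc, ← pow_add, ← two_mul, pow_mul, neg_one_sq, one_pow, one_mul]
  have hf : (n ! : ℚ) ≠ 0 := by exact_mod_cast n.factorial_ne_zero
  rw [binomPoly, eval_mul, eval_C, hdesc]
  field_simp

/-- Both sides are values of polynomials in `r` that agree on `ℕ`, hence also at `r = -1`,
where `C(-1, n) = (-1) ^ n`. -/
theorem sum_neg_one_pow_eq_of_sum_prod_choose_eq {κ ι : Type*} [Fintype ι] {B B' : Finset κ}
    {δ δ' : κ → ι → ℕ}
    (h : ∀ r : ℕ, ∑ x ∈ B, ∏ i, r.choose (δ x i) = ∑ x ∈ B', ∏ i, r.choose (δ' x i)) :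
    ∑ x ∈ B, (-1 : ℤ) ^ ∑ i, δ x i = ∑ x ∈ B', (-1 : ℤ) ^ ∑ i, δ' x i := by
  let p : Finset κ → (κ → ι → ℕ) → ℚ[X] := fun B δ => ∑ x ∈ B, ∏ i, binomPoly (δ x i)
  have hp : p B δ = p B' δ' := by
    refine eq_of_infinite_eval_eq _ _
      (Set.infinite_of_injective_forall_mem Nat.cast_injective (fun r : ℕ => ?_))
    simp only [p, Set.mem_ofPred_eq, eval_finsetSum, eval_prod, eval_natCast_binomPoly]
    exact_mod_cast h r
  have h1 := congrArg (eval (-1)) hp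
  simp only [p, eval_finsetSum, eval_prod, eval_neg_one_binomPoly, prod_pow_eq_pow_sum] at h1
  exact_mod_cast h1

theorem card_filter_card_sdiff {α : Type*} [Fintype α] [DecidableEq α] {k y : ℕ}
    (U V : Finset α) (hU : #U = k) (hy : y ≤ k) :
    #{s : Finset α | #s = k ∧ #(U \ s) = y ∧ #(s \ V) = k} =
      (#(U \ V)).choose (k - y) * (#(U ∪ V)ᶜ).choose y := by
  -- `#(s \ V) = #s` makes `s` avoid `V`, so it splits into `s ∩ U ⊆ U \ V` and `s \ U ⊆ (U ∪ V)ᶜ`.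
  rw [← card_powersetCard, ← card_powersetCard, ← card_product]
  refine card_nbij' (fun s => (s ∩ U, s \ U)) (fun p => p.1 ∪ p.2) ?_ ?_ ?_ ?_
  · intro s hs
    simp only [coe_filter, mem_univ, true_and, Set.mem_ofPred_eq] at hs
    have hV : s \ V = s := eq_of_subset_of_card_le sdiff_subset (by omega)
    simp only [coe_product, Set.mem_prod, mem_coe, mem_powersetCard]
    refine ⟨⟨?_, ?_⟩, ?_, ?_⟩ <;> grind [mem_compl]
  · rintro ⟨P, Q⟩ h
    simp only [coe_product, Set.mem_prod, mem_coe, mem_powersetCard] at h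
    simp only [coe_filter, mem_univ, true_and, Set.mem_ofPred_eq]
    obtain ⟨⟨hP, hPc⟩, hQ, hQc⟩ := h
    have hPQ : Disjoint P Q := by grind [Finset.disjoint_left, mem_compl]
    have hU : U \ (P ∪ Q) = U \ P := by grind [mem_compl]
    have hV : (P ∪ Q) \ V = P ∪ Q := by grind [mem_compl]
    rw [hU, hV, card_union_of_disjoint hPQ,
      card_sdiff_of_subset (fun x hx => (mem_sdiff.1 (hP hx)).1)]
    omega
  · intro s _
    exact sup_inf_sdiff s U
  · rintro ⟨P, Q⟩ h
    simp only [coe_product, Set.mem_prod, mem_coe, mem_powersetCard] at h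
    obtain ⟨⟨hP, -⟩, hQ, -⟩ := h
    ext x <;> grind [mem_compl]

theorem exists_card_eq_card_eq_card_sdiff_eq {α : Type*} [Fintype α] [DecidableEq α] {k a : ℕ}
    (hk : 2 * k ≤ Fintype.card α) (ha : a ≤ k) :
    ∃ U V : Finset α, #U = k ∧ #V = k ∧ #(U \ V) = a := by
  obtain ⟨X, -, hX⟩ := exists_subset_card_eq (s := (univ : Finset α)) (n := k + a)
    (by rw [card_univ]; omega)
  obtain ⟨U, hUX, hU⟩ := exists_subset_card_eq (s := X) (n := k) (by omega)
  obtain ⟨W, hWU, hW⟩ := exists_subset_card_eq (s := U) (n := k - a) (by omega)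
  refine ⟨U, (X \ U) ∪ W, hU, ?_, ?_⟩
  · rw [card_union_of_disjoint (disjoint_of_subset_right hWU sdiff_disjoint),
      card_sdiff_of_subset hUX]
    omega
  · have : U \ ((X \ U) ∪ W) = U \ W := by grind
    rw [this, card_sdiff_of_subset hWU]
    omega

theorem vasCount_singleton_top {k d m : ℕ} (β : Set (Fin d → Fin (k + 1)))
    {a : Fin d → Fin (k + 1)} {u v : Fin d → Finset (Fin m)} (hu : ∀ i, #(u i) = k)
    (hv : ∀ i, #(v i) = k) (huv : ∀ i, #(u i \ v i) = a i) :
    vasCount k d m β {⊤} u v = ∑ b ∈ (Set.toFinite β).toFinset,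
      ∏ i, (a i : ℕ).choose (k - b i) * (m - k - a i).choose (b i) := by
  let fiber (i : Fin d) (y : ℕ) : Finset (Finset (Fin m)) :=
    {s | #s = k ∧ #(u i \ s) = y ∧ #(s \ v i) = k}
  let W := (Set.toFinite β).toFinset.biUnion fun b => Fintype.piFinset fun i => fiber i (b i)
  calc vasCount k d m β {⊤} u v = (W : Set (Fin d → Finset (Fin m))).ncard := by
        rw [vasCount]
        congr 1
        ext w
        simp only [Set.mem_ofPred_eq, Set.mem_singleton_iff, exists_eq_left, Pi.top_apply,
          Fin.top_eq_last, Fin.val_last, W, coe_biUnion, Set.Finite.mem_toFinset, mem_coe,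
          Fintype.mem_piFinset, fiber, mem_filter, mem_univ, true_and, Set.mem_iUnion, exists_prop]
        constructor
        · rintro ⟨hw, ⟨b, hb, hbw⟩, hwv⟩
          exact ⟨b, hb, fun i => ⟨hw i, hbw i, hwv i⟩⟩
        · rintro ⟨b, hb, hbw⟩
          exact ⟨fun i => (hbw i).1, ⟨b, hb, fun i => (hbw i).2.1⟩, fun i => (hbw i).2.2⟩
    _ = #W := Set.ncard_coe_finset W
    _ = _ := by
      rw [card_biUnion]
      · refine sum_congr rfl fun b _ => ?_
        rw [Fintype.card_piFinset]
        refine prod_congr rfl fun i _ => ?_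
        have hUV := card_sdiff_add_card (u i) (v i)
        rw [card_filter_card_sdiff _ _ (hu i) (b i).is_le, huv i, card_compl, Fintype.card_fin,
          ← hUV, huv i, hv i, Nat.sub_add_eq, Nat.sub_right_comm]
      · intro b _ b' _ hbb'
        refine disjoint_left.2 fun w hw hw' => hbb' (funext fun i => Fin.ext ?_)
        rw [Fintype.mem_piFinset] at hw hw'
        exact (mem_filter.1 (hw i)).2.2.1.symm.trans (mem_filter.1 (hw' i)).2.2.1

theorem coVec_coVec {k d : ℕ} (a : Fin d → Fin (k + 1)) : coVec (coVec a) = a :=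
  funext fun i => Fin.ext (Nat.sub_sub_self (a i).is_le)

theorem coVec_le_coVec_iff {k d : ℕ} {a b : Fin d → Fin (k + 1)} :
    coVec a ≤ coVec b ↔ b ≤ a := by
  simp only [Pi.le_def, Fin.le_iff_val_le_val, coVec]
  exact forall_congr' fun i => by have := (a i).is_le; have := (b i).is_le; omega

theorem ncard_image_coVec {k d : ℕ} (α : Set (Fin d → Fin (k + 1))) (b : Fin d → Fin (k + 1)) :
    {c | c ∈ coVec '' α ∧ coVec b ≤ c}.ncard = {a | a ∈ α ∧ a ≤ b}.ncard := by
  have hinj : Function.Injective (coVec : (Fin d → Fin (k + 1)) → _) :=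
    Function.LeftInverse.injective coVec_coVec
  rw [← Set.ncard_image_of_injective _ hinj]
  congr 1
  ext c
  simp only [Set.mem_ofPred_eq, Set.mem_image]
  constructor
  · rintro ⟨_, ⟨⟨a, ha, rfl⟩, hba⟩, rfl⟩
    rw [coVec_coVec]
    exact ⟨ha, coVec_le_coVec_iff.1 hba⟩
  · rintro ⟨hc, hcb⟩
    exact ⟨coVec c, ⟨⟨c, hc, rfl⟩, coVec_le_coVec_iff.2 hcb⟩, coVec_coVec c⟩

theorem choose_mul_choose_sub_eq_ite {k x t : ℕ} (hx : x ≤ k) (ht : t ≤ k) :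
    x.choose (k - t) * (k - x).choose t = if t = k - x then 1 else 0 := by
  split_ifs with h
  · subst h
    rw [Nat.sub_sub_self hx, Nat.choose_self, Nat.choose_self]
  · rcases Nat.lt_or_gt_of_ne h with h | h
    · rw [Nat.choose_eq_zero_of_lt (by omega : x < k - t), zero_mul]
    · rw [Nat.choose_eq_zero_of_lt h, mul_zero]

theorem sum_prod_choose_eq_ite {k d : ℕ} (B : Finset (Fin d → Fin (k + 1)))
    (a : Fin d → Fin (k + 1)) :
    ∑ b ∈ B, ∏ i, (a i : ℕ).choose (k - b i) * (k - a i).choose (b i) =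
      if coVec a ∈ B then 1 else 0 := by
  have hb : ∀ b : Fin d → Fin (k + 1), (∀ i, (b i : ℕ) = k - a i) ↔ b = coVec a := fun b => by
    simp only [funext_iff, Fin.ext_iff, coVec]
  have hprod : ∀ b : Fin d → Fin (k + 1),
      ∏ i, (a i : ℕ).choose (k - b i) * (k - a i).choose (b i) = if b = coVec a then 1 else 0 :=
    fun b => by
      rw [Fintype.prod_congr _ _ fun i => choose_mul_choose_sub_eq_ite (a i).is_le (b i).is_le,
        Fintype.prod_boole]
      simp only [hb]
  simp only [hprod, sum_ite_eq']

theorem factorial_mul_factorial_mul_choose_mul_choose {k x t : ℕ} (r : ℕ) (hx : x ≤ k)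
    (ht : t ≤ k) :
    (k - t)! * t ! * (x.choose (k - t) * (r + (k - x)).choose t) =
      x ! * (k - x)! * (r + (k - x)).choose (k - x) *
        if k - x ≤ t then r.choose (t - (k - x)) else 0 := by
  split_ifs with hxt
  · set s := k - x
    have h₁ : x.choose (k - t) * (k - t)! * (t - s)! = x ! := by
      rw [show t - s = x - (k - t) by omega]
      exact Nat.choose_mul_factorial_mul_factorial (by omega)
    have h₂ : t.choose s * s ! * (t - s)! = t ! := Nat.choose_mul_factorial_mul_factorial hxt
    have h₃ : (r + s).choose t * t.choose s = (r + s).choose s * r.choose (t - s) := by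
      rw [Nat.choose_mul hxt, Nat.add_sub_cancel]
    refine Nat.eq_of_mul_eq_mul_right (Nat.factorial_pos (t - s)) ?_
    calc (k - t)! * t ! * (x.choose (k - t) * (r + s).choose t) * (t - s)!
        = t ! * (r + s).choose t * (x.choose (k - t) * (k - t)! * (t - s)!) := by ring
      _ = t.choose s * s ! * (t - s)! * (r + s).choose t * x ! := by rw [h₁, h₂]
      _ = x ! * s ! * ((r + s).choose t * t.choose s) * (t - s)! := by ring
      _ = x ! * s ! * (r + s).choose s * r.choose (t - s) * (t - s)! := by rw [h₃]; ring
  · rw [Nat.choose_eq_zero_of_lt (by omega : x < k - t), zero_mul, mul_zero, mul_zero]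

theorem prod_factorial_mul_prod_choose {k d : ℕ} (r : ℕ) (a b : Fin d → Fin (k + 1)) :
    (∏ i, (k - b i)! * (b i : ℕ)!) *
        ∏ i, (a i : ℕ).choose (k - b i) * (r + (k - a i)).choose (b i) =
      (∏ i, (a i : ℕ)! * (k - a i)! * (r + (k - a i)).choose (k - a i)) *
        if ∀ i, coVec a i ≤ b i then ∏ i, r.choose (b i - coVec a i) else 0 := by
  rw [← prod_mul_distrib, Fintype.prod_congr _ _ fun i =>
    factorial_mul_factorial_mul_choose_mul_choose r (a i).is_le (b i).is_le, prod_mul_distrib]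
  congr 1
  split_ifs with h
  · exact prod_congr rfl fun i _ => if_pos (h i)
  · obtain ⟨i, hi⟩ := not_forall.1 h
    exact prod_eq_zero (mem_univ i) (if_neg hi)

namespace IsVAS

variable {k d : ℕ} {S : Set (Set (Fin d → Fin (k + 1)))} {α β : Set (Fin d → Fin (k + 1))}
  {a a' : Fin d → Fin (k + 1)}

theorem nonempty_of_mem (hS : IsVAS k d S) (hα : α ∈ S) : α.Nonempty :=
  Set.nonempty_iff_ne_empty.2 fun h => hS.1.1 (h ▸ hα)

@[to_additive]
theorem prod_apply_eq {M : Type*} [CommMonoid M] (hS : IsVAS k d S) (hα : α ∈ S) (ha : a ∈ α)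
    (ha' : a' ∈ α) (f : Fin (k + 1) → M) : ∏ i, f (a' i) = ∏ i, f (a i) := by
  obtain ⟨π, rfl⟩ := hS.2.1 α hα a ha a' ha'
  exact Equiv.prod_comp π (f ∘ a)

theorem singleton_top_mem (hS : IsVAS k d S) : {⊤} ∈ S := by
  obtain ⟨γ, ⟨hγ, htop⟩, -⟩ := hS.1.2 ⊤
  convert hγ
  refine (Set.eq_singleton_iff_unique_mem.2 ⟨htop, fun y hy => ?_⟩).symm
  obtain ⟨π, rfl⟩ := hS.2.1 γ hγ ⊤ htop y hy
  rfl

theorem sum_prod_choose_eq (hS : IsVAS k d S) (hα : α ∈ S) (hβ : β ∈ S) (ha : a ∈ α)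
    (ha' : a' ∈ α) (r : ℕ) :
    ∑ b ∈ (Set.toFinite β).toFinset,
        ∏ i, (a i : ℕ).choose (k - b i) * (r + (k - a i)).choose (b i) =
      ∑ b ∈ (Set.toFinite β).toFinset,
        ∏ i, (a' i : ℕ).choose (k - b i) * (r + (k - a' i)).choose (b i) := by
  have hcard : 2 * k ≤ Fintype.card (Fin (2 * k + r)) := by simp
  choose u v hu hv huv using fun i => exists_card_eq_card_eq_card_sdiff_eq hcard (a i).is_le
  choose u' v' hu' hv' huv' using fun i => exists_card_eq_card_eq_card_sdiff_eq hcard (a' i).is_le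
  have h := hS.2.2 α hα β hβ {⊤} hS.singleton_top_mem a ha a' ha' _ (by omega) u v u' v'
    hu hv huv hu' hv' huv'
  rw [vasCount_singleton_top β hu hv huv, vasCount_singleton_top β hu' hv' huv'] at h
  have hsub : ∀ x : Fin (k + 1), 2 * k + r - k - x = r + (k - x) := fun x => by omega
  simpa only [hsub] using h

theorem coVec_mem_iff (hS : IsVAS k d S) (hα : α ∈ S) (hβ : β ∈ S) (ha : a ∈ α)
    (ha' : a' ∈ α) : coVec a ∈ β ↔ coVec a' ∈ β := by
  have h := hS.sum_prod_choose_eq hα hβ ha ha' 0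
  simp only [zero_add, sum_prod_choose_eq_ite, Set.Finite.mem_toFinset] at h
  split_ifs at h <;> simp_all

theorem image_coVec_mem (hS : IsVAS k d S) (hα : α ∈ S) : coVec '' α ∈ S := by
  obtain ⟨a₀, ha₀⟩ := hS.nonempty_of_mem hα
  obtain ⟨γ, ⟨hγ, hcγ⟩, -⟩ := hS.1.2 (coVec a₀)
  convert hγ
  ext y
  constructor
  · rintro ⟨x, hx, rfl⟩
    exact (hS.coVec_mem_iff hα hγ ha₀ hx).1 hcγ
  · intro hy
    refine ⟨coVec y, ?_, coVec_coVec y⟩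
    exact (hS.coVec_mem_iff hγ hα hcγ hy).1 ((coVec_coVec a₀).symm ▸ ha₀)

theorem sum_prod_choose_sub_eq (hS : IsVAS k d S) (hα : α ∈ S) (hβ : β ∈ S) (ha : a ∈ α)
    (ha' : a' ∈ α) (r : ℕ) :
    ∑ b ∈ (Set.toFinite β).toFinset with ∀ i, coVec a i ≤ b i, ∏ i, r.choose (b i - coVec a i) =
      ∑ b ∈ (Set.toFinite β).toFinset with ∀ i, coVec a' i ≤ b i,
        ∏ i, r.choose (b i - coVec a' i) := by
  obtain ⟨b₀, hb₀⟩ := hS.nonempty_of_mem hβ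
  let V (c : Fin d → Fin (k + 1)) := ∏ i, (c i : ℕ)! * (k - c i)! * (r + (k - c i)).choose (k - c i)
  have key : ∀ c, (∏ i, (k - b₀ i)! * (b₀ i : ℕ)!) * ∑ b ∈ (Set.toFinite β).toFinset,
      ∏ i, (c i : ℕ).choose (k - b i) * (r + (k - c i)).choose (b i) =
      V c * ∑ b ∈ (Set.toFinite β).toFinset with ∀ i, coVec c i ≤ b i,
        ∏ i, r.choose (b i - coVec c i) := fun c => by
    rw [sum_filter, mul_sum, mul_sum]
    refine sum_congr rfl fun b hb => ?_
    have hW := hS.prod_apply_eq hβ hb₀ ((Set.Finite.mem_toFinset _).1 hb)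
      fun x => (k - x)! * (x : ℕ)!
    rw [← hW, prod_factorial_mul_prod_choose]
  have hV : V a' = V a :=
    hS.prod_apply_eq hα ha ha' fun x => x ! * (k - x)! * (r + (k - x)).choose (k - x)
  have hVpos : 0 < V a := prod_pos fun i _ =>
    Nat.mul_pos (by positivity) (Nat.choose_pos (Nat.le_add_left _ _))
  refine Nat.eq_of_mul_eq_mul_left hVpos ?_
  rw [← key, hS.sum_prod_choose_eq hα hβ ha ha' r, key, hV]

theorem ncard_coVec_le_eq (hS : IsVAS k d S) (hα : α ∈ S) (hβ : β ∈ S) (ha : a ∈ α)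
    (ha' : a' ∈ α) :
    {b | b ∈ β ∧ coVec a ≤ b}.ncard = {b | b ∈ β ∧ coVec a' ≤ b}.ncard := by
  obtain ⟨b₀, hb₀⟩ := hS.nonempty_of_mem hβ
  let F (c : Fin d → Fin (k + 1)) := {b ∈ (Set.toFinite β).toFinset | ∀ i, coVec c i ≤ b i}
  have hF : ∀ c, {b | b ∈ β ∧ coVec c ≤ b}.ncard = #(F c) := fun c => by
    rw [← Set.ncard_coe_finset]
    congr 1
    ext b
    simp [F, Pi.le_def]
  have hsign : ∀ c, ∑ b ∈ F c, (-1 : ℤ) ^ ∑ i, (b i - coVec c i : ℕ) =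
      #(F c) * ((-1) ^ (∑ i, (b₀ i : ℕ)) * (-1) ^ ∑ i, (coVec c i : ℕ)) := fun c => by
    rw [← nsmul_eq_mul, ← sum_const]
    refine sum_congr rfl fun b hb => ?_
    obtain ⟨hbβ, hcb⟩ := mem_filter.1 hb
    have hsum : ∑ i, (b i : ℕ) = ∑ i, (b i - coVec c i : ℕ) + ∑ i, (coVec c i : ℕ) := by
      rw [← sum_add_distrib]
      exact sum_congr rfl fun i _ => (Nat.sub_add_cancel (hcb i)).symm
    rw [← hS.sum_apply_eq hβ hb₀ ((Set.Finite.mem_toFinset _).1 hbβ) fun x => (x : ℕ), hsum,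
      pow_add, mul_assoc, ← pow_add, ← two_mul, pow_mul, neg_one_sq, one_pow, mul_one]
  have h := sum_neg_one_pow_eq_of_sum_prod_choose_eq (hS.sum_prod_choose_sub_eq hα hβ ha ha')
  have hc : ∑ i, (coVec a' i : ℕ) = ∑ i, (coVec a i : ℕ) := hS.sum_apply_eq hα ha ha' (k - ·)
  rw [hsign, hsign, hc] at h
  rw [hF, hF]
  exact_mod_cast mul_right_cancel₀ (by positivity) h

end IsVAS

theorem stmt16_general (k d : ℕ)
    (S : Set (Set (Fin d → Fin (k+1)))) (hS : IsVAS k d S) :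
    (∀ α ∈ S, coVec '' α ∈ S) ∧
    (∀ α ∈ S, ∀ β ∈ S,
      (∀ a ∈ α, ∀ a' ∈ α,
        {b : Fin d → Fin (k+1) | b ∈ β ∧ ∀ i, (a i : ℕ) ≤ (b i : ℕ)}.ncard =
        {b : Fin d → Fin (k+1) | b ∈ β ∧ ∀ i, (a' i : ℕ) ≤ (b i : ℕ)}.ncard) ∧
      (∀ b ∈ β, ∀ b' ∈ β,
        {a : Fin d → Fin (k+1) | a ∈ α ∧ ∀ i, (a i : ℕ) ≤ (b i : ℕ)}.ncard =
        {a : Fin d → Fin (k+1) | a ∈ α ∧ ∀ i, (a i : ℕ) ≤ (b' i : ℕ)}.ncard)) := by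
  refine ⟨fun α hα => hS.image_coVec_mem hα, fun α hα β hβ => ⟨fun a ha a' ha' => ?_,
    fun b hb b' hb' => ?_⟩⟩
  · have h := hS.ncard_coVec_le_eq (hS.image_coVec_mem hα) hβ (Set.mem_image_of_mem coVec ha)
      (Set.mem_image_of_mem coVec ha')
    rw [coVec_coVec, coVec_coVec] at h
    exact h
  · have h := hS.ncard_coVec_le_eq hβ (hS.image_coVec_mem hα) hb hb'
    rw [ncard_image_coVec, ncard_image_coVec] at h
    exact h

theorem stmt16 (k d : ℕ) (hk : 1 ≤ k) (hd : 1 ≤ d)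
    (S : Set (Set (Fin d → Fin (k+1)))) (hS : IsVAS k d S) :
    (∀ α ∈ S, coVec '' α ∈ S) ∧
    (∀ α ∈ S, ∀ β ∈ S,
      (∀ a ∈ α, ∀ a' ∈ α,
        {b : Fin d → Fin (k+1) | b ∈ β ∧ ∀ i, (a i : ℕ) ≤ (b i : ℕ)}.ncard =
        {b : Fin d → Fin (k+1) | b ∈ β ∧ ∀ i, (a' i : ℕ) ≤ (b i : ℕ)}.ncard) ∧
      (∀ b ∈ β, ∀ b' ∈ β,
        {a : Fin d → Fin (k+1) | a ∈ α ∧ ∀ i, (a i : ℕ) ≤ (b i : ℕ)}.ncard =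
        {a : Fin d → Fin (k+1) | a ∈ α ∧ ∀ i, (a i : ℕ) ≤ (b' i : ℕ)}.ncard)) :=
  stmt16_general k d S hS

end Paper
end

section
/- Let 𝔖 be a homogeneous vector association scheme on {0, …, k}^d and let β be a cell of 𝔖. Then the sum Σ_{b ∈ β} b is a constant vector, i.e., Σ_{b ∈ β} b_i is the same for every coordinate i ∈ [d]. -/
/-!
Let `u` agree with `v` except in coordinate `i`, where one point is exchanged, so that
`u \ v` has the homogeneous pattern `eᵢ`. A tuple `w` counted by `vasCount k d m β β u v` has
the same pattern `b ∈ β` from `u` as to `v` (they agree off `i`, and all of `β` has the same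
coordinate sum), so the count is `∑_{b ∈ β} p¹_{bᵢbᵢ} ∏_{l ≠ i} p⁰_{b_l b_l}`. As
`k (m - k) p¹_{tt} = t (m - 2t) p⁰_{tt}` and `∏_l p⁰_{b_l b_l}` is positive and constant on
the orbit `β`, the axiom for the homogeneous cell, which contains every `eᵢ`, makes
`∑_{b ∈ β} bᵢ (m - 2bᵢ)` independent of `i` for every `m ≥ 2k`; the difference of the cases
`m = 2k + 1` and `m = 2k` is `∑_{b ∈ β} bᵢ`.
-/

namespace Paper


open Finset

theorem cast_add_one_mul_choose_succ (n t : ℕ) :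
    ((n + 1) * n.choose (t + 1) : ℤ) = (n + 1).choose (t + 1) * (n - t) := by
  rcases le_or_gt t n with h | h
  · have := Nat.choose_mul_succ_eq n (t + 1)
    rw [Nat.add_sub_add_right] at this
    rw [mul_comm, ← Nat.cast_sub h]
    exact_mod_cast this
  · rw [Nat.choose_eq_zero_of_lt (by omega : n < t + 1),
      Nat.choose_eq_zero_of_lt (by omega : n + 1 < t + 1)]
    simp

-- `k (m - k) p¹_{tt} = t (m - 2t) p⁰_{tt}` with `n = k - 1`, `M = m - k - 1`, `t + 1` for `t`.
theorem add_one_mul_add_one_mul_choose_add (n M t : ℕ) :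
    ((n + 1) * (M + 1) * (n.choose (t + 1) * M.choose t + n.choose t * M.choose (t + 1)) : ℤ) =
      (t + 1) * (n + M + 2 - 2 * (t + 1)) * ((n + 1).choose (t + 1) * (M + 1).choose (t + 1)) := by
  have ha := cast_add_one_mul_choose_succ n t
  have hb : ((n + 1) * n.choose t : ℤ) = (n + 1).choose (t + 1) * (t + 1) := by
    exact_mod_cast Nat.add_one_mul_choose_eq n t
  have hc : ((M + 1) * M.choose t : ℤ) = (M + 1).choose (t + 1) * (t + 1) := by
    exact_mod_cast Nat.add_one_mul_choose_eq M t
  have he := cast_add_one_mul_choose_succ M t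
  linear_combination ((M + 1) * M.choose t : ℤ) * ha + ((n + 1).choose (t + 1) * (n - t) : ℤ) * hc
    + ((M + 1) * M.choose (t + 1) : ℤ) * hb + ((n + 1).choose (t + 1) * (t + 1) : ℤ) * he

section Counting

variable {α : Type*} [DecidableEq α] {A : Finset α} {x y : α}

theorem card_sdiff_insert_insert_iff (hx : x ∉ A) (hy : y ∉ A) (hxy : x ≠ y)
    {k : ℕ} (hA : #A + 1 = k) (t : ℕ) (s : Finset α) :
    (#s = k ∧ #(insert y A \ s) = t ∧ #(s \ insert x A) = t) ↔
      (s ∩ {x, y} = {x, y} ∧ #(A \ s) = t ∧ #(s \ ({x, y} ∪ A)) + 1 = t) ∨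
      (s ∩ {x, y} = ∅ ∧ #(A \ s) + 1 = t ∧ #(s \ ({x, y} ∪ A)) = t) := by
  have hsA : #(s ∩ A) + #(A \ s) = #A := by rw [inter_comm]; exact card_inter_add_card_sdiff A s
  have hs : #(s ∩ A) + #(s \ A) = #s := card_inter_add_card_sdiff s A
  have hpair : x ∈ s → y ∈ s → 2 ≤ #(s \ A) := fun hxs hys => by
    simpa [card_pair hxy] using card_le_card (s := {x, y}) (t := s \ A)
      (by simp [insert_subset_iff, *])
  have hB : s \ ({x, y} ∪ A) = ((s \ A).erase y).erase x := by
    rw [insert_union, singleton_union, sdiff_insert, sdiff_insert]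
  rw [hB, sdiff_insert, inter_eq_right, insert_subset_iff, singleton_subset_iff,
    ← disjoint_iff_inter_eq_empty, disjoint_insert_right, disjoint_singleton_right]
  by_cases hxs : x ∈ s <;> by_cases hys : y ∈ s <;>
    simp [hxs, hys, hx, hy, hxy, card_insert_of_notMem, insert_sdiff_of_mem,
      insert_sdiff_of_notMem, card_erase_of_mem] at hpair ⊢ <;> omega

variable [Fintype α]

/-- The paper's `p^x_{bc}(m)` with `α = Fin m`, for `k`-sets `U`, `V` with `#(U \ V) = x`. -/
def intersectionNumber (k : ℕ) (U V : Finset α) (b c : ℕ) : ℕ :=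
  #{w : Finset α | #w = k ∧ #(U \ w) = b ∧ #(w \ V) = c}

theorem card_filter_inter_eq_choose_mul_choose {R P : Finset α} (hRP : Disjoint R P)
    {r : Finset α} (hr : r ⊆ R) (p q : ℕ) :
    #{s : Finset α | s ∩ R = r ∧ #(P \ s) = p ∧ #(s \ (R ∪ P)) = q} =
      (#P).choose p * (#(R ∪ P)ᶜ).choose q := by
  have glue : ∀ a ⊆ P, ∀ b ⊆ (R ∪ P)ᶜ, let s := r ∪ (P \ a) ∪ b
      s ∩ R = r ∧ P \ s = a ∧ s \ (R ∪ P) = b := by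
    intro a ha b hb
    have hz : ∀ z, (z ∈ r → z ∈ R) ∧ (z ∈ R → z ∉ P) ∧ (z ∈ a → z ∈ P) ∧
        (z ∈ b → z ∉ R ∧ z ∉ P) := fun z =>
      ⟨@hr z, fun h => disjoint_left.1 hRP h, @ha z, fun h => by simpa using hb h⟩
    refine ⟨?_, ?_, ?_⟩ <;> ext z <;> simp only [mem_union, mem_inter, mem_sdiff] <;>
      have := hz z <;> tauto
  rw [← card_powersetCard p P, ← card_powersetCard q (R ∪ P)ᶜ, ← card_product]
  refine card_nbij' (fun s => (P \ s, s \ (R ∪ P))) (fun ab => r ∪ (P \ ab.1) ∪ ab.2)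
    ?_ ?_ ?_ ?_
  · intro s hs
    simp only [coe_filter, mem_univ, true_and, Set.mem_ofPred_eq] at hs
    simp only [coe_product, Set.mem_prod, mem_coe, mem_powersetCard]
    exact ⟨⟨sdiff_subset, hs.2.1⟩, fun z hz => by simpa using (mem_sdiff.1 hz).2, hs.2.2⟩
  · rintro ⟨a, b⟩ hab
    simp only [coe_product, Set.mem_prod, mem_coe, mem_powersetCard] at hab
    obtain ⟨hrs, has, hbs⟩ := glue a hab.1.1 b hab.2.1
    simp only [coe_filter, mem_univ, true_and, Set.mem_ofPred_eq]
    exact ⟨hrs, by rw [has, hab.1.2], by rw [hbs, hab.2.2]⟩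
  · intro s hs
    simp only [coe_filter, mem_univ, true_and, Set.mem_ofPred_eq] at hs
    rw [← hs.1]
    ext z
    simp only [mem_union, mem_inter, mem_sdiff]
    tauto
  · rintro ⟨a, b⟩ hab
    simp only [coe_product, Set.mem_prod, mem_coe, mem_powersetCard] at hab
    obtain ⟨-, has, hbs⟩ := glue a hab.1.1 b hab.2.1
    exact Prod.ext has hbs

theorem intersectionNumber_self {k : ℕ} {U : Finset α} (hU : #U = k) (t : ℕ) :
    intersectionNumber k U U t t = k.choose t * (Fintype.card α - k).choose t := by
  have h := card_filter_inter_eq_choose_mul_choose (disjoint_empty_left U) (subset_refl ∅) t t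
  rw [empty_union, card_compl, hU] at h
  rw [intersectionNumber, ← h]
  congr 1
  refine filter_congr fun s _ => ?_
  rw [inter_empty, eq_self, true_and, and_iff_right_iff_imp]
  rintro ⟨h₁, h₂⟩
  rw [← hU, ← card_sdiff_eq_card_sdiff_iff, h₁, h₂]

theorem intersectionNumber_insert_insert (hx : x ∉ A) (hy : y ∉ A) (hxy : x ≠ y) {k : ℕ}
    (hA : #A + 1 = k) (t : ℕ) :
    (k * (Fintype.card α - k) * intersectionNumber k (insert y A) (insert x A) t t : ℤ) =
      t * (Fintype.card α - 2 * t) * (k.choose t * (Fintype.card α - k).choose t : ℕ) := by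
  have hR : Disjoint {x, y} A := by simp [hx, hy]
  have hcard : Fintype.card α = #A + 2 + #({x, y} ∪ A)ᶜ := by
    rw [card_compl, card_union_of_disjoint hR, card_pair hxy]
    have := card_le_univ ({x, y} ∪ A)
    rw [card_union_of_disjoint hR, card_pair hxy] at this
    omega
  rw [intersectionNumber,
    filter_congr fun s _ => card_sdiff_insert_insert_iff hx hy hxy hA t s,
    filter_or, card_union_of_disjoint (disjoint_filter.2 fun s _ h₁ h₂ => by
      simpa using h₁.1.symm.trans h₂.1)]
  cases t with
  | zero => simp
  | succ t =>
    simp only [add_left_inj]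
    rw [card_filter_inter_eq_choose_mul_choose hR subset_rfl,
      card_filter_inter_eq_choose_mul_choose hR (empty_subset _), ← hA, hcard,
      show #A + 2 + #({x, y} ∪ A)ᶜ - (#A + 1) = #({x, y} ∪ A)ᶜ + 1 by omega]
    push_cast
    linear_combination add_one_mul_add_one_mul_choose_add (#A) (#({x, y} ∪ A)ᶜ) t

end Counting

theorem eq_of_sum_eq_of_forall_ne {ι M : Type*} [Fintype ι] [DecidableEq ι]
    [AddCancelCommMonoid M] {f g : ι → M} {i : ι} (hfg : ∀ l ≠ i, f l = g l)
    (hsum : ∑ l, f l = ∑ l, g l) : f = g := by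
  funext l
  by_cases hl : l = i
  · subst hl
    rw [← add_sum_erase _ _ (mem_univ l), ← add_sum_erase _ _ (mem_univ l),
      sum_congr rfl fun l' hl' => hfg l' (ne_of_mem_erase hl')] at hsum
    exact add_right_cancel hsum
  · exact hfg l hl

theorem vasCount_eq_sum_prod {k d m : ℕ} {β : Finset (Fin d → Fin (k + 1))}
    (hβ : ∀ b ∈ β, ∀ c ∈ β, ∑ l, (b l : ℕ) = ∑ l, (c l : ℕ)) {u v : Fin d → Finset (Fin m)}
    {i : Fin d} (hu : ∀ l ≠ i, #(u l) = k) (huv : ∀ l ≠ i, u l = v l) :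
    vasCount k d m β β u v = ∑ b ∈ β, ∏ l, intersectionNumber k (u l) (v l) (b l) (b l) := by
  have hpat : ∀ w : Fin d → Finset (Fin m), (∀ l, #(w l) = k) → ∀ b ∈ β, ∀ c ∈ β,
      (∀ l, #(u l \ w l) = b l) → (∀ l, #(w l \ v l) = c l) → b = c := by
    intro w hw b hb c hc hbw hcw
    have := eq_of_sum_eq_of_forall_ne (f := fun l => (b l : ℕ)) (g := fun l => (c l : ℕ))
      (i := i) (fun l hl => by
        rw [← hbw, ← hcw, ← huv l hl, card_sdiff_comm ((hu l hl).trans (hw l).symm)])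
      (hβ b hb c hc)
    exact funext fun l => Fin.ext (congrFun this l)
  have hset : {w : Fin d → Finset (Fin m) | (∀ l, #(w l) = k) ∧
      (∃ b ∈ (β : Set (Fin d → Fin (k + 1))), ∀ l, #(u l \ w l) = (b l : ℕ)) ∧
      (∃ c ∈ (β : Set (Fin d → Fin (k + 1))), ∀ l, #(w l \ v l) = (c l : ℕ))} =
      ↑(β.biUnion fun b => Fintype.piFinset fun l =>
        ({s | #s = k ∧ #(u l \ s) = b l ∧ #(s \ v l) = b l} : Finset (Finset (Fin m)))) := by
    ext w
    simp only [Set.mem_ofPred_eq, coe_biUnion, mem_coe, Set.mem_iUnion, Fintype.coe_piFinset,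
      Set.mem_pi, Set.mem_univ, coe_filter, mem_univ, true_and, exists_prop, forall_const]
    constructor
    · rintro ⟨hw, ⟨b, hb, hbw⟩, ⟨c, hc, hcw⟩⟩
      obtain rfl := hpat w hw b hb c hc hbw hcw
      exact ⟨b, hb, fun l => ⟨hw l, hbw l, hcw l⟩⟩
    · rintro ⟨b, hb, hw⟩
      exact ⟨fun l => (hw l).1, ⟨b, hb, fun l => (hw l).2.1⟩, ⟨b, hb, fun l => (hw l).2.2⟩⟩
  rw [vasCount, hset, Set.ncard_coe_finset, card_biUnion]
  · simp only [Fintype.card_piFinset, intersectionNumber]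
  · intro b _ c _ hbc
    refine disjoint_left.2 fun w hwb hwc => hbc (funext fun l => Fin.ext ?_)
    simp only [Fintype.mem_piFinset, mem_filter, mem_univ, true_and] at hwb hwc
    exact (hwb l).2.1.symm.trans (hwc l).2.1

theorem exists_finset_and_pair_notMem {α : Type*} [Fintype α] [DecidableEq α] {n : ℕ}
    (h : n + 2 ≤ Fintype.card α) : ∃ (A : Finset α) (x y : α), x ∉ A ∧ y ∉ A ∧ x ≠ y ∧ #A = n := by
  obtain ⟨x, y, hxy⟩ := Fintype.exists_pair_of_one_lt_card (by omega : 1 < Fintype.card α)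
  obtain ⟨A, hA, hcard⟩ := exists_subset_card_eq (s := ({x, y} : Finset α)ᶜ) (n := n)
    (by rw [card_compl, card_pair hxy]; omega)
  exact ⟨A, x, y, fun h => by simpa using hA h, fun h => by simpa using hA h, hxy, hcard⟩

section VectorScheme

variable {k d m : ℕ} {β : Finset (Fin d → Fin (k + 1))} {A : Finset (Fin m)} {x y : Fin m}

theorem vasCount_update_insert (hβ : ∀ b ∈ β, ∀ c ∈ β, ∑ l, (b l : ℕ) = ∑ l, (c l : ℕ))
    (hx : x ∉ A) (hy : y ∉ A) (hxy : x ≠ y) (hA : #A + 1 = k) (i : Fin d) :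
    (k * (m - k) * vasCount k d m β β (Function.update (fun _ => insert x A) i (insert y A))
        (fun _ => insert x A) : ℤ) =
      ∑ b ∈ β, ((b i : ℕ) : ℤ) * (m - 2 * (b i : ℕ)) *
        ∏ l, (k.choose (b l) * (m - k).choose (b l) : ℕ) := by
  have hU : #(insert x A) = k := by rw [card_insert_of_notMem hx, hA]
  rw [vasCount_eq_sum_prod hβ (i := i) (fun l hl => by rw [Function.update_of_ne hl, hU])
    (fun l hl => Function.update_of_ne hl _ _), Nat.cast_sum, mul_sum]
  refine sum_congr rfl fun b _ => ?_
  rw [← mul_prod_erase univ _ (mem_univ i), ← mul_prod_erase univ _ (mem_univ i),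
    prod_congr rfl fun l hl => by
      rw [Function.update_of_ne (ne_of_mem_erase hl), intersectionNumber_self hU,
        Fintype.card_fin],
    Function.update_self]
  have hi := intersectionNumber_insert_insert hx hy hxy hA (b i)
  rw [Fintype.card_fin] at hi
  push_cast at hi ⊢
  linear_combination (∏ l ∈ univ.erase i, ((k.choose (b l) : ℤ) * ((m - k).choose (b l) : ℕ))) * hi

theorem vasCount_update_insert_eq {S : Set (Set (Fin d → Fin (k + 1)))} (hS : IsVAS k d S)
    (hhom : VASHomog k d S) (hβ : ↑β ∈ S) (hx : x ∉ A) (hy : y ∉ A) (hxy : x ≠ y)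
    (hA : #A + 1 = k) (i j : Fin d) (hm : 2 * k ≤ m) :
    vasCount k d m β β (Function.update (fun _ => insert x A) i (insert y A))
        (fun _ => insert x A) =
      vasCount k d m β β (Function.update (fun _ => insert x A) j (insert y A))
        (fun _ => insert x A) := by
  set v : Fin d → Finset (Fin m) := fun _ => insert x A
  have hv : ∀ l, #(v l) = k := fun _ => by rw [card_insert_of_notMem hx, hA]
  have hu : ∀ i l, #(Function.update v i (insert y A) l) = k := fun i l => by
    rcases eq_or_ne l i with rfl | hl
    · rw [Function.update_self, card_insert_of_notMem hy, hA]
    · rw [Function.update_of_ne hl, hv l]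
  have hpattern : ∀ i, ∃ a ∈ {a : Fin d → Fin (k + 1) | ∃ i₀ : Fin d, (a i₀ : ℕ) = 1 ∧
      ∀ i, i ≠ i₀ → (a i : ℕ) = 0}, ∀ l, #(Function.update v i (insert y A) l \ v l) = a l := by
    intro i
    refine ⟨Pi.single i ⟨1, by omega⟩, ⟨i, by simp, fun l hl => by simp [hl]⟩, fun l => ?_⟩
    rcases eq_or_ne l i with rfl | hl
    · simp [v, hy, hxy.symm, insert_sdiff_of_notMem]
    · rw [Function.update_of_ne hl, sdiff_self, Pi.single_eq_of_ne hl]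
      rfl
  obtain ⟨a, ha, hpa⟩ := hpattern i
  obtain ⟨a', ha', hpa'⟩ := hpattern j
  exact hS.2.2 _ hhom _ hβ _ hβ a ha a' ha' m hm _ _ _ _ (hu i) hv hpa (hu j) hv hpa'

theorem sum_mul_sub_two_mul_eq (hk : 1 ≤ k) {S : Set (Set (Fin d → Fin (k + 1)))}
    (hS : IsVAS k d S) (hhom : VASHomog k d S) (hβ : ↑β ∈ S) (i j : Fin d) (hm : 2 * k ≤ m) :
    ∑ b ∈ β, ((b i : ℕ) : ℤ) * (m - 2 * (b i : ℕ)) =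
      ∑ b ∈ β, ((b j : ℕ) : ℤ) * (m - 2 * (b j : ℕ)) := by
  obtain ⟨A, x, y, hx, hy, hxy, hA⟩ :=
    exists_finset_and_pair_notMem (α := Fin m) (n := k - 1) (by simp; omega)
  replace hA : #A + 1 = k := by omega
  have hcount := vasCount_update_insert_eq hS hhom hβ hx hy hxy hA i j hm
  have hsum : ∀ b ∈ β, ∀ c ∈ β, ∑ l, (b l : ℕ) = ∑ l, (c l : ℕ) := fun b hb c hc => by
    obtain ⟨π, rfl⟩ := hS.2.1 _ hβ b hb c hc
    exact (Equiv.sum_comp π fun l => (b l : ℕ)).symm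
  rcases β.eq_empty_or_nonempty with rfl | ⟨b₀, hb₀⟩
  · simp
  set G := ∏ l, (k.choose (b₀ l) * (m - k).choose (b₀ l) : ℕ)
  have hG : ∀ b ∈ β, ∏ l, (k.choose (b l) * (m - k).choose (b l) : ℕ) = G := fun b hb => by
    obtain ⟨π, rfl⟩ := hS.2.1 _ hβ b₀ hb₀ b hb
    exact Equiv.prod_comp π fun l => k.choose (b₀ l) * (m - k).choose (b₀ l)
  have hGpos : 0 < G := prod_pos fun l _ =>
    Nat.mul_pos (Nat.choose_pos (b₀ l).is_le) (Nat.choose_pos (by have := (b₀ l).is_le; omega))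
  have key : ∀ l, (k * (m - k) * vasCount k d m β β
      (Function.update (fun _ => insert x A) l (insert y A)) (fun _ => insert x A) : ℤ) =
      (∑ b ∈ β, ((b l : ℕ) : ℤ) * (m - 2 * (b l : ℕ))) * G := fun l => by
    rw [vasCount_update_insert hsum hx hy hxy hA, sum_mul]
    exact sum_congr rfl fun b hb => by rw [hG b hb]
  have := key i
  rw [hcount, key j] at this
  exact (mul_left_inj' (by positivity)).1 this.symm

end VectorScheme

theorem stmt17_general (k d : ℕ) (hk : 1 ≤ k)
    (S : Set (Set (Fin d → Fin (k+1)))) (hS : IsVAS k d S) (hhom : VASHomog k d S)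
    (β : Set (Fin d → Fin (k+1))) (hβ : β ∈ S) (i j : Fin d) :
    ∑ᶠ b ∈ β, ((b : Fin d → Fin (k+1)) i : ℕ) = ∑ᶠ b ∈ β, ((b : Fin d → Fin (k+1)) j : ℕ) := by
  obtain ⟨β, rfl⟩ := β.toFinite.exists_finset_coe
  rw [finsum_mem_coe_finset, finsum_mem_coe_finset]
  have h₀ := sum_mul_sub_two_mul_eq hk hS hhom hβ i j (le_refl (2 * k))
  have h₁ := sum_mul_sub_two_mul_eq hk hS hhom hβ i j (Nat.le_succ (2 * k))
  have shift : ∀ l, ∑ b ∈ β, ((b l : ℕ) : ℤ) * ((2 * k + 1 : ℕ) - 2 * (b l : ℕ)) =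
      ∑ b ∈ β, ((b l : ℕ) : ℤ) * ((2 * k : ℕ) - 2 * (b l : ℕ)) + ∑ b ∈ β, ((b l : ℕ) : ℤ) :=
    fun l => by
      rw [← sum_add_distrib]
      exact sum_congr rfl fun b _ => by push_cast; ring
  zify
  linarith [shift i, shift j]

theorem stmt17 (k d : ℕ) (hk : 1 ≤ k) (hd : 1 ≤ d)
    (S : Set (Set (Fin d → Fin (k+1)))) (hS : IsVAS k d S) (hhom : VASHomog k d S)
    (β : Set (Fin d → Fin (k+1))) (hβ : β ∈ S) (i j : Fin d) :
    ∑ᶠ b ∈ β, ((b : Fin d → Fin (k+1)) i : ℕ) = ∑ᶠ b ∈ β, ((b : Fin d → Fin (k+1)) j : ℕ) :=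
  stmt17_general k d hk S hS hhom β hβ i j

end Paper
end

section
/- Let 𝔖 be a homogeneous vector association scheme on {0, …, k}^d with d ≤ 2. Then 𝔖 is trivial, i.e., the cells of 𝔖 are exactly the orbits of Sym(d) on {0, …, k}^d. -/
/-!
For `d ≤ 1` every cell is trivially closed under `Sym(d)`. For `d = 2`, if some cell fails to be a
full orbit, it is a singleton `{(x, y)}` with `x ≠ y`, and so is the cell of `(y, x)`; we may take
`x < y`. Count the `w` with `u \ w` of type `(x, y)` and `w \ v` in the cell of `(x, y - 1)`, once for a
pair `(u, v)` of type `(0, 1)` and once for one of type `(1, 0)`; both types lie in the homogeneous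
cell, so the counts must agree. Shifted windows of length `k` in `[2k]` give a `w` for `(0, 1)`, while
for `(1, 0)` the second coordinate of `w \ v` is forced to be `y`, which no permutation of
`(x, y - 1)` has.
-/

namespace Paper


open Finset

def window (m k s : ℕ) : Finset (Fin m) := {t : Fin m | s ≤ (t : ℕ) ∧ (t : ℕ) < s + k}

section Window

variable {m k s t : ℕ}

lemma card_filter_le_lt {p q : ℕ} (hq : q ≤ m) :
    #{t : Fin m | p ≤ (t : ℕ) ∧ (t : ℕ) < q} = q - p := by
  rw [← Nat.card_Ico, ← card_map Fin.valEmbedding]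
  congr 1
  ext n
  simp only [mem_map, mem_filter, mem_univ, true_and, Fin.valEmbedding_apply, mem_Ico]
  constructor
  · rintro ⟨t, ht, rfl⟩
    exact ht
  · intro hn
    exact ⟨⟨n, by omega⟩, hn, rfl⟩

lemma card_window (h : s + k ≤ m) : #(window m k s) = k := by
  rw [window, card_filter_le_lt h]
  omega

lemma card_window_sdiff_window (hst : s ≤ t) (hts : t ≤ s + k) (htm : t ≤ m) :
    #(window m k s \ window m k t) = t - s := by
  rw [← card_filter_le_lt htm]
  congr 1
  ext i
  simp only [window, mem_sdiff, mem_filter, mem_univ, true_and]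
  omega

lemma card_window_sdiff_window' (hst : s ≤ t) (hts : t ≤ s + k) (hm : t + k ≤ m) :
    #(window m k t \ window m k s) = t - s := by
  rw [← card_sdiff_comm (by rw [card_window hm, card_window (by omega)]),
    card_window_sdiff_window hst hts (by omega)]

end Window

lemma vasCount_eq_zero_of_forall_ne {k d m : ℕ} {β γ : Set (Fin d → Fin (k+1))}
    {u v : Fin d → Finset (Fin m)} (i : Fin d) (hu : #(u i) = k) (huv : u i = v i)
    (hβγ : ∀ b ∈ β, ∀ c ∈ γ, (c i : ℕ) ≠ b i) :
    vasCount k d m β γ u v = 0 := by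
  rw [vasCount, Set.ncard_eq_zero (Set.toFinite _), Set.eq_empty_iff_forall_notMem]
  rintro w ⟨hw, ⟨b, hb, hub⟩, ⟨c, hc, hwv⟩⟩
  have hwu : #(w i \ u i) = b i := by
    rw [← card_sdiff_comm (by rw [hw i, hu]), hub i]
  exact hβγ b hb c hc (by rw [← hwv i, ← huv, hwu])

lemma IsVAS.eq_range_orbit_of_forall_comp_perm_mem {k d : ℕ} {S : Set (Set (Fin d → Fin (k+1)))}
    (hS : IsVAS k d S) (hperm : ∀ α ∈ S, ∀ a ∈ α, ∀ π : Equiv.Perm (Fin d), a ∘ ⇑π ∈ α) :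
    S = Set.range (fun a : Fin d → Fin (k+1) =>
      {a' : Fin d → Fin (k+1) | ∃ π : Equiv.Perm (Fin d), a' = a ∘ ⇑π}) := by
  have horbit : ∀ α ∈ S, ∀ a ∈ α,
      {a' : Fin d → Fin (k+1) | ∃ π : Equiv.Perm (Fin d), a' = a ∘ ⇑π} = α := by
    intro α hα a ha
    ext a'
    constructor
    · rintro ⟨π, rfl⟩
      exact hperm α hα a ha π
    · exact hS.2.1 α hα a ha a'
  ext α
  constructor
  · intro hα
    obtain ⟨a, ha⟩ := Set.nonempty_iff_ne_empty.mpr fun h => hS.1.1 (h ▸ hα)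
    exact ⟨a, horbit α hα a ha⟩
  · rintro ⟨a, rfl⟩
    obtain ⟨β, ⟨hβ, haβ⟩, -⟩ := hS.1.2 a
    dsimp only
    rwa [horbit β hβ a haβ]

section TwoCoordinates

variable {k : ℕ} {S : Set (Set (Fin 2 → Fin (k+1)))}

lemma perm_fin_two_eq_one_or_eq_swap (π : Equiv.Perm (Fin 2)) : π = 1 ∨ π = Equiv.swap 0 1 := by
  revert π
  decide

lemma IsVAS.singleton_notMem_of_lt (hS : IsVAS k 2 S) (hhom : VASHomog k 2 S)
    {b : Fin 2 → Fin (k+1)} (hlt : (b 0 : ℕ) < b 1) : ({b} : Set (Fin 2 → Fin (k+1))) ∉ S := by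
  intro hb
  have hb1k : (b 1 : ℕ) ≤ k := Nat.lt_succ_iff.mp (b 1).isLt
  let c₀ : Fin 2 → Fin (k+1) := ![b 0, ⟨b 1 - 1, by omega⟩]
  obtain ⟨γ, ⟨hγ, hc₀⟩, -⟩ := hS.1.2 c₀
  let A := window (2 * k) k 0
  let B := window (2 * k) k 1
  have hA : #A = k := card_window (by omega)
  have hB : #B = k := card_window (by omega)
  have hAB : #(A \ B) = 1 := card_window_sdiff_window (by omega) (by omega) (by omega)
  have hpos : 0 < vasCount k 2 (2 * k) {b} γ ![A, A] ![A, B] := by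
    rw [vasCount, Set.ncard_pos (Set.toFinite _)]
    refine ⟨![window (2 * k) k (b 0), window (2 * k) k (b 1)], ?_, ⟨b, rfl, ?_⟩, ⟨c₀, hc₀, ?_⟩⟩ <;>
      simp only [Fin.forall_fin_two, Matrix.cons_val_zero, Matrix.cons_val_one]
    · exact ⟨card_window (by omega), card_window (by omega)⟩
    · exact ⟨card_window_sdiff_window (by omega) (by omega) (by omega),
        card_window_sdiff_window (by omega) (by omega) (by omega)⟩
    · exact ⟨card_window_sdiff_window' (by omega) (by omega) (by omega),
        card_window_sdiff_window' (by omega) (by omega) (by omega)⟩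
  have hzero : vasCount k 2 (2 * k) {b} γ ![A, A] ![B, A] = 0 := by
    refine vasCount_eq_zero_of_forall_ne 1 hA rfl ?_
    rintro b' rfl c hc
    obtain ⟨π, rfl⟩ := hS.2.1 γ hγ c₀ hc₀ c hc
    rcases perm_fin_two_eq_one_or_eq_swap π with rfl | rfl
    all_goals
      simp only [Equiv.Perm.coe_one, id_eq, Equiv.swap_apply_right, Function.comp_apply,
        Matrix.cons_val_zero, Matrix.cons_val_one, Matrix.cons_val_fin_one, ne_eq, c₀]
      omega
  have hcount := hS.2.2 _ hhom {b} hb γ hγ ![0, ⟨1, by omega⟩]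
    ⟨1, rfl, by simp [Fin.forall_fin_two]⟩ ![⟨1, by omega⟩, 0] ⟨0, rfl, by simp [Fin.forall_fin_two]⟩
    (2 * k) le_rfl ![A, A] ![A, B] ![A, A] ![B, A]
    (by simp [Fin.forall_fin_two, hA]) (by simp [Fin.forall_fin_two, hA, hB])
    (by simp [Fin.forall_fin_two, hAB]) (by simp [Fin.forall_fin_two, hA])
    (by simp [Fin.forall_fin_two, hA, hB]) (by simp [Fin.forall_fin_two, hAB])
  omega

lemma IsVAS.singleton_mem_of_comp_swap_notMem (hS : IsVAS k 2 S)
    {α : Set (Fin 2 → Fin (k+1))} (hα : α ∈ S) {a : Fin 2 → Fin (k+1)} (ha : a ∈ α)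
    (hswap : a ∘ ⇑(Equiv.swap 0 1) ∉ α) : ({a} : Set (Fin 2 → Fin (k+1))) ∈ S := by
  suffices α = {a} from this ▸ hα
  refine Set.eq_singleton_iff_unique_mem.mpr ⟨ha, fun a' ha' => ?_⟩
  obtain ⟨π, rfl⟩ := hS.2.1 α hα a ha a' ha'
  rcases perm_fin_two_eq_one_or_eq_swap π with rfl | rfl
  · rfl
  · exact absurd ha' hswap

lemma IsVAS.comp_swap_mem (hS : IsVAS k 2 S) (hhom : VASHomog k 2 S)
    {α : Set (Fin 2 → Fin (k+1))} (hα : α ∈ S) {a : Fin 2 → Fin (k+1)} (ha : a ∈ α) :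
    a ∘ ⇑(Equiv.swap 0 1) ∈ α := by
  by_contra hswap
  set a' := a ∘ ⇑(Equiv.swap 0 1)
  have ha'swap : a' ∘ ⇑(Equiv.swap 0 1) = a := by
    ext i
    simp [a']
  obtain ⟨β, ⟨hβ, ha'β⟩, -⟩ := hS.1.2 a'
  have haβ : a ∉ β := fun haβ =>
    hswap (ExistsUnique.unique (hS.1.2 a) ⟨hβ, haβ⟩ ⟨hα, ha⟩ ▸ ha'β)
  have hne : (a 0 : ℕ) ≠ a 1 := fun h => hswap <| by
    convert ha using 1
    ext i
    fin_cases i <;> simp [a', h]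
  rcases Nat.lt_or_gt_of_ne hne with hlt | hgt
  · exact hS.singleton_notMem_of_lt hhom hlt (hS.singleton_mem_of_comp_swap_notMem hα ha hswap)
  · exact hS.singleton_notMem_of_lt hhom (by simpa [a'] using hgt)
      (hS.singleton_mem_of_comp_swap_notMem hβ ha'β (ha'swap ▸ haβ))

end TwoCoordinates

theorem stmt18_general (k d : ℕ) (hd2 : d ≤ 2)
    (S : Set (Set (Fin d → Fin (k+1)))) (hS : IsVAS k d S) (hhom : VASHomog k d S) :
    S = Set.range (fun a : Fin d → Fin (k+1) =>
      {a' : Fin d → Fin (k+1) | ∃ π : Equiv.Perm (Fin d), a' = a ∘ ⇑π}) := by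
  refine hS.eq_range_orbit_of_forall_comp_perm_mem fun α hα a ha π => ?_
  rcases Nat.lt_or_eq_of_le hd2 with hd1 | rfl
  · have : Subsingleton (Fin d) := Fin.subsingleton_iff_le_one.mpr (by omega)
    rwa [Subsingleton.elim π 1, Equiv.Perm.coe_one, Function.comp_id]
  · rcases perm_fin_two_eq_one_or_eq_swap π with rfl | rfl
    · exact ha
    · exact hS.comp_swap_mem hhom hα ha

theorem stmt18 (k d : ℕ) (hk : 1 ≤ k) (hd : 1 ≤ d) (hd2 : d ≤ 2)
    (S : Set (Set (Fin d → Fin (k+1)))) (hS : IsVAS k d S) (hhom : VASHomog k d S) :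
    S = Set.range (fun a : Fin d → Fin (k+1) =>
      {a' : Fin d → Fin (k+1) | ∃ π : Equiv.Perm (Fin d), a' = a ∘ ⇑π}) :=
  stmt18_general k d hd2 S hS hhom

end Paper
end
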